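/- arXiv:1302.7262 — 2 statements merged into one kernel-verified Lean document; each statement's English description precedes it below -/
import Mathlib

section
/- Let P_s be the self-inverting permutation obtained from the bitonic permutation P_b = Z₀ ++ reverse(Z₁) of an n-bit key ω (n ≥ 1). Then the elements of P_s at indices 1, 2, ..., n are all greater than n. -/
/-!
Write `n` for the bit length of `ω`. Since `B*` starts with `n` ones, `Z₁` starts with
`1, …, n` and every other position in `B*` exceeds `n`. Hence `P_b` (of length `2n + 1`)
ends with `n, n - 1, …, 1`, preceded by `n + 1` entries all greater than `n`. So `i ≤ n`
is `b_{2n+2-i}`, and `P_s i = b_i` is one of those large entries.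
-/

/-- Binary representation of `ω`, most significant bit first. -/
def binRep (ω : ℕ) : List Bool := (Nat.bits ω).reverse

/-- The extended binary `B*`: `n` ones, then the one's complement of `B`, then a zero. -/
def extBin (ω : ℕ) : List Bool :=
  List.replicate (binRep ω).length true ++ (binRep ω).map (!·) ++ [false]

/-- Ascending list of 1-indexed positions of bit `b` in the bit string `l`. -/
def posOf (l : List Bool) (b : Bool) : List ℕ :=
  ((List.range l.length).filter (fun i => l.getD i false == b)).map (· + 1)

/-- `Z₀`: ascending positions of zeros in `B*`. -/
def Z0 (ω : ℕ) : List ℕ := posOf (extBin ω) false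

/-- `Z₁`: ascending positions of ones in `B*`. -/
def Z1 (ω : ℕ) : List ℕ := posOf (extBin ω) true

/-- Bitonic permutation `P_b = Z₀ ++ reverse Z₁`. -/
def Pb (ω : ℕ) : List ℕ := Z0 ω ++ (Z1 ω).reverse

/-- The self-inverting permutation `P_s`: it pairs the elements of `P_b`
equidistant from its extremes, i.e. `P_s (b_{2n+2-i}) = b_i`. -/
def Ps (ω : ℕ) (x : ℕ) : ℕ :=
  (Pb ω).getD ((Pb ω).length - 1 - (Pb ω).idxOf x) 0

open List

theorem one_le_of_mem_posOf {l : List Bool} {b : Bool} {x : ℕ} (h : x ∈ posOf l b) :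
    1 ≤ x := by
  obtain ⟨a, -, rfl⟩ := mem_map.mp h
  exact Nat.le_add_left 1 a

theorem posOf_append (l₁ l₂ : List Bool) (b : Bool) :
    posOf (l₁ ++ l₂) b = posOf l₁ b ++ (posOf l₂ b).map (· + l₁.length) := by
  unfold posOf
  rw [length_append, range_add, filter_append, map_append]
  congr 1
  · refine congrArg _ (filter_congr fun i hi => ?_)
    rw [getD_append _ _ _ _ (mem_range.mp hi)]
  · rw [filter_map, map_map, map_map]
    refine congr (congrArg _ (funext fun x => by simp only [Function.comp_apply]; omega))
      (filter_congr fun i _ => ?_)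
    simp only [Function.comp_apply]
    rw [getD_append_right _ _ _ _ (Nat.le_add_right _ _), Nat.add_sub_cancel_left]

theorem posOf_replicate_self (n : ℕ) (b : Bool) :
    posOf (replicate n b) b = (range n).map (· + 1) := by
  unfold posOf
  rw [length_replicate, filter_eq_self.mpr]
  intro a ha
  simp [mem_range.mp ha]

theorem posOf_replicate_not (n : ℕ) (b : Bool) :
    posOf (replicate n b) (!b) = [] := by
  unfold posOf
  rw [length_replicate, filter_eq_nil_iff.mpr, map_nil]
  intro a ha
  simp [mem_range.mp ha]

theorem length_posOf_add_length_posOf_not (l : List Bool) (b : Bool) :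
    (posOf l b).length + (posOf l (!b)).length = l.length := by
  unfold posOf
  rw [length_map, length_map]
  conv_rhs => rw [← length_range (n := l.length),
    length_eq_length_filter_add (fun i => l.getD i false == b)]
  congr 3
  funext i
  cases l.getD i false <;> cases b <;> rfl

theorem idxOf_append_reverse_map_succ_range {A : List ℕ} {n i : ℕ} (hiA : i ∉ A)
    (hi1 : 1 ≤ i) (hin : i ≤ n) :
    (A ++ ((range n).map (· + 1)).reverse).idxOf i = A.length + (n - i) := by
  set R := ((range n).map (· + 1)).reverse
  have hR : n - i < R.length := by rw [length_reverse, length_map, length_range]; omega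
  have hRi : R[n - i] = i := by
    simp only [R, getElem_reverse, getElem_map, getElem_range, length_map, length_range]
    omega
  have hnd : R.Nodup := nodup_reverse.mpr ((nodup_range).map fun _ _ => Nat.succ.inj)
  have hidx := hnd.idxOf_getElem _ hR
  rw [hRi] at hidx
  rw [idxOf_append_of_notMem hiA, hidx]

section Bitonic

variable {ω n : ℕ}

theorem extBin_eq (hn : (binRep ω).length = n) :
    extBin ω = replicate n true ++ ((binRep ω).map (!·) ++ [false]) := by
  rw [extBin, hn, append_assoc]

theorem length_extBin (hn : (binRep ω).length = n) : (extBin ω).length = 2 * n + 1 := by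
  rw [extBin_eq hn, length_append, length_replicate, length_append, length_map, hn,
    length_singleton]
  omega

theorem lt_of_mem_Z0 (hn : (binRep ω).length = n) {x : ℕ} (hx : x ∈ Z0 ω) : n < x := by
  rw [Z0, extBin_eq hn, posOf_append, ← Bool.not_true, posOf_replicate_not, nil_append,
    length_replicate, mem_map] at hx
  obtain ⟨a, ha, rfl⟩ := hx
  have := one_le_of_mem_posOf ha
  omega

theorem Z1_eq (hn : (binRep ω).length = n) :
    Z1 ω = (range n).map (· + 1) ++ (posOf ((binRep ω).map (!·) ++ [false]) true).map (· + n) := by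
  rw [Z1, extBin_eq hn, posOf_append, posOf_replicate_self, length_replicate]

theorem length_Z0_add_length_Z1 (hn : (binRep ω).length = n) :
    (Z0 ω).length + (Z1 ω).length = 2 * n + 1 := by
  rw [← length_extBin hn, add_comm]
  exact length_posOf_add_length_posOf_not _ true

theorem exists_Pb_eq_append (hn : (binRep ω).length = n) :
    ∃ A : List ℕ, Pb ω = A ++ ((range n).map (· + 1)).reverse ∧
      A.length = n + 1 ∧ ∀ x ∈ A, n < x := by
  set U := (posOf ((binRep ω).map (!·) ++ [false]) true).map (· + n)
  refine ⟨Z0 ω ++ U.reverse, ?_, ?_, ?_⟩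
  · rw [Pb, Z1_eq hn, reverse_append, append_assoc]
  · have := length_Z0_add_length_Z1 hn
    rw [Z1_eq hn] at this
    simp only [U, length_append, length_map, length_range, length_reverse] at this ⊢
    omega
  · intro x hx
    rcases mem_append.mp hx with hx | hx
    · exact lt_of_mem_Z0 hn hx
    · obtain ⟨a, ha, rfl⟩ := mem_map.mp (mem_reverse.mp hx)
      have := one_le_of_mem_posOf ha
      omega

end Bitonic

theorem stmt10_general (ω n : ℕ) (hn : (binRep ω).length = n) :
    ∀ i, 1 ≤ i → i ≤ n → n < Ps ω i := by
  intro i hi1 hin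
  obtain ⟨A, hPb, hAlen, hA⟩ := exists_Pb_eq_append hn
  have hiA : i ∉ A := fun h => absurd (hA i h) (by omega)
  have hmirror : (Pb ω).length - 1 - (Pb ω).idxOf i = i - 1 := by
    rw [hPb, idxOf_append_reverse_map_succ_range hiA hi1 hin]
    simp only [length_append, length_reverse, length_map, length_range]
    omega
  have hlt : i - 1 < A.length := by omega
  rw [Ps, hmirror, hPb, getD_append _ _ _ _ hlt, getD_eq_getElem _ _ hlt]
  exact hA _ (getElem_mem hlt)

/-- The elements of `P_s` at indices `1,…,n` are all greater than `n`. -/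
theorem stmt10 (ω n : ℕ) (hω : 0 < ω) (hn : (binRep ω).length = n) (hn1 : 1 ≤ n) :
    ∀ i, 1 ≤ i → i ≤ n → n < Ps ω i :=
  stmt10_general ω n hn
end

section
/- For any n-bit key ω (n ≥ 1), the self-inverting permutation P_s satisfies P_s(1) = n+1 and P_s(n+1) = 1. -/
section Reflection

variable {α : Type*} [BEq α] [LawfulBEq α]

theorem List.getD_length_sub_one_sub_idxOf_head (a b d : α) (m : List α) :
    (a :: m ++ [b]).getD ((a :: m ++ [b]).length - 1 - (a :: m ++ [b]).idxOf a) d = b := by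
  simp [List.idxOf_cons_self]

theorem List.getD_length_sub_one_sub_idxOf_last {a b : α} (d : α) {m : List α}
    (hb : b ∉ a :: m) :
    (a :: m ++ [b]).getD ((a :: m ++ [b]).length - 1 - (a :: m ++ [b]).idxOf b) d = a := by
  rw [List.idxOf_append_of_notMem hb]
  simp

end Reflection

theorem posOf_nodup (l : List Bool) (b : Bool) : (posOf l b).Nodup :=
  (List.nodup_range.filter _).map (add_left_injective 1)

theorem mem_posOf {l : List Bool} {b : Bool} {k : ℕ} :
    k ∈ posOf l b ↔ ∃ i < l.length, l.getD i false = b ∧ i + 1 = k := by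
  simp [posOf, and_assoc]

theorem posOf_disjoint_posOf_not (l : List Bool) (b : Bool) :
    (posOf l b).Disjoint (posOf l !b) := by
  intro k hk hk'
  obtain ⟨i, -, hi, rfl⟩ := mem_posOf.mp hk
  obtain ⟨j, -, hj, hij⟩ := mem_posOf.mp hk'
  obtain rfl : j = i := by omega
  rw [hi] at hj
  simp at hj

theorem posOf_eq_cons_of_first {l : List Bool} {b : Bool} {i : ℕ} (hi : i < l.length)
    (hb : l.getD i false = b) (hfirst : ∀ j < i, l.getD j false ≠ b) :
    ∃ t, posOf l b = (i + 1) :: t := by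
  rw [← List.head?_eq_some_iff, posOf, List.head?_map, List.head?_filter,
    List.find?_range_eq_some.mpr]
  · rfl
  · exact ⟨beq_iff_eq.mpr hb, List.mem_range.mpr hi, fun j hj => by simpa using hfirst j hj⟩

theorem Nat.getLast?_bits {m : ℕ} (hm : 0 < m) : m.bits.getLast? = some true := by
  induction m using Nat.binaryRec with
  | zero => omega
  | bit b k ih =>
    rcases Nat.eq_zero_or_pos k with rfl | hk
    · cases b
      · simp [Nat.bit] at hm
      · simp
    · rw [Nat.bits_append_bit k b (fun h0 => absurd h0 hk.ne'), List.getLast?_cons, ih hk]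
      rfl

theorem binRep_head? {ω : ℕ} (hω : 0 < ω) : (binRep ω).head? = some true := by
  rw [binRep, List.head?_reverse, Nat.getLast?_bits hω]

theorem binRep_length_pos {ω : ℕ} (hω : 0 < ω) : 0 < (binRep ω).length := by
  obtain ⟨t, ht⟩ := List.head?_eq_some_iff.mp (binRep_head? hω)
  simp [ht]

theorem extBin_getD_of_lt {ω i : ℕ} (hi : i < (binRep ω).length) :
    (extBin ω).getD i false = true := by
  simp [extBin, List.getD_eq_getElem?_getD, List.getElem?_append, hi]

theorem extBin_getD_length {ω : ℕ} (hω : 0 < ω) :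
    (extBin ω).getD (binRep ω).length false = false := by
  obtain ⟨t, ht⟩ := List.head?_eq_some_iff.mp (binRep_head? hω)
  simp [extBin, List.getD_eq_getElem?_getD, ht]

theorem extBin_length (ω : ℕ) : (extBin ω).length = 2 * (binRep ω).length + 1 := by
  simp [extBin]; omega

theorem Z0_eq_cons {ω : ℕ} (hω : 0 < ω) : ∃ t, Z0 ω = ((binRep ω).length + 1) :: t :=
  posOf_eq_cons_of_first (by rw [extBin_length]; omega) (extBin_getD_length hω)
    fun _ hj => ne_of_eq_of_ne (extBin_getD_of_lt hj) Bool.noConfusion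

theorem Z1_eq_cons {ω : ℕ} (hω : 0 < ω) : ∃ t, Z1 ω = 1 :: t :=
  posOf_eq_cons_of_first (by rw [extBin_length]; omega)
    (extBin_getD_of_lt (binRep_length_pos hω)) fun _ hj => absurd hj (Nat.not_lt_zero _)

theorem Pb_nodup (ω : ℕ) : (Pb ω).Nodup :=
  (posOf_nodup _ _).append (List.nodup_reverse.mpr (posOf_nodup _ _))
    (List.disjoint_reverse_right.mpr (posOf_disjoint_posOf_not _ false))

theorem stmt13_general (ω n : ℕ) (hω : 0 < ω) (hn : (binRep ω).length = n) :
    Ps ω 1 = n + 1 ∧ Ps ω (n + 1) = 1 := by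
  subst hn
  obtain ⟨t0, ht0⟩ := Z0_eq_cons hω
  obtain ⟨t1, ht1⟩ := Z1_eq_cons hω
  have hPb : Pb ω = ((binRep ω).length + 1) :: (t0 ++ t1.reverse) ++ [1] := by
    simp [Pb, ht0, ht1]
  have h1 : 1 ∉ ((binRep ω).length + 1) :: (t0 ++ t1.reverse) := by
    have := Pb_nodup ω
    rw [hPb] at this
    exact fun h => (List.nodup_append.mp this).2.2 1 h 1 (List.mem_singleton_self 1) rfl
  unfold Ps
  rw [hPb]
  exact ⟨List.getD_length_sub_one_sub_idxOf_last _ h1,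
    List.getD_length_sub_one_sub_idxOf_head _ _ _ _⟩

/-- `P_s 1 = n+1` and `P_s (n+1) = 1`. -/
theorem stmt13 (ω n : ℕ) (hω : 0 < ω) (hn : (binRep ω).length = n) (hn1 : 1 ≤ n) :
    Ps ω 1 = n + 1 ∧ Ps ω (n + 1) = 1 :=
  stmt13_general ω n hω hn
end
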